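/- The family TL' with its state operations is a model of the parameterized theory of single-bit mutable state with local values without equation (7): for all n, i, j : Bool and all elements of the appropriate levels, getT' n (putT' n false z) (putT' n true z) = z; putT' n i (putT' n j z) = putT' n j z; putT' n i (getT' n x0 x1) = putT' n i (if i then x1 else x0); localT' n i (closeT' n x) = x; localT' n i (getT' (n+1) x0 x1) = localT' n i (if i then x1 else x0); and localT' n i (putT' (n+1) j z) = localT' n j z. -/

import Mathlib

namespace Stmt7

/-- `TL' A 0 = Bool → A × Bool` and `TL' A (n+1) = Bool → TL' A n × Bool`. -/
def TL' (A : Type) : ℕ → Type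
  | 0 => Bool → A × Bool
  | n + 1 => Bool → TL' A n × Bool

/-- `get` branches on the stored bit. -/
def getT' (A : Type) : ∀ n, TL' A n → TL' A n → TL' A n
  | 0, f, g => fun s => if s then g s else f s
  | _ + 1, f, g => fun s => if s then g s else f s

/-- `put i` overwrites the state with `i`. -/
def putT' (A : Type) : ∀ n, Bool → TL' A n → TL' A n
  | 0, i, f => fun _ => f i
  | _ + 1, i, f => fun _ => f i

/-- `close` closes a scope, remembering the current state. -/
def closeT' (A : Type) (n : ℕ) (x : TL' A n) : TL' A (n + 1) := fun s => (x, s)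

/-- `local i` opens a scope with local state initialized to `i`. -/
def localT' (A : Type) (n : ℕ) (i : Bool) (f : TL' A (n + 1)) : TL' A n := (f i).1

variable {A : Type}

/- Each law holds definitionally once the level (on which `getT'` and `putT'` are defined by cases)
and the bits they branch on are split. -/

theorem getT'_putT'_false_putT'_true (n : ℕ) (z : TL' A n) :
    getT' A n (putT' A n false z) (putT' A n true z) = z := by
  cases n <;> funext s <;> cases s <;> rfl

theorem putT'_putT' (n : ℕ) (i j : Bool) (z : TL' A n) :
    putT' A n i (putT' A n j z) = putT' A n j z := by
  cases n <;> rfl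

theorem putT'_getT' (n : ℕ) (i : Bool) (x0 x1 : TL' A n) :
    putT' A n i (getT' A n x0 x1) = putT' A n i (if i then x1 else x0) := by
  cases n <;> cases i <;> rfl

theorem localT'_closeT' (n : ℕ) (i : Bool) (x : TL' A n) : localT' A n i (closeT' A n x) = x :=
  rfl

theorem localT'_getT' (n : ℕ) (i : Bool) (x0 x1 : TL' A (n + 1)) :
    localT' A n i (getT' A (n + 1) x0 x1) = localT' A n i (if i then x1 else x0) := by
  cases i <;> rfl

theorem localT'_putT' (n : ℕ) (i j : Bool) (z : TL' A (n + 1)) :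
    localT' A n i (putT' A (n + 1) j z) = localT' A n j z :=
  rfl

theorem stmt_7 (A : Type) :
    (∀ n (z : TL' A n),
      getT' A n (putT' A n false z) (putT' A n true z) = z) ∧
    (∀ n (i j : Bool) (z : TL' A n),
      putT' A n i (putT' A n j z) = putT' A n j z) ∧
    (∀ n (i : Bool) (x0 x1 : TL' A n),
      putT' A n i (getT' A n x0 x1) = putT' A n i (if i then x1 else x0)) ∧
    (∀ n (i : Bool) (x : TL' A n),
      localT' A n i (closeT' A n x) = x) ∧
    (∀ n (i : Bool) (x0 x1 : TL' A (n + 1)),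
      localT' A n i (getT' A (n + 1) x0 x1) = localT' A n i (if i then x1 else x0)) ∧
    (∀ n (i j : Bool) (z : TL' A (n + 1)),
      localT' A n i (putT' A (n + 1) j z) = localT' A n j z) :=
  ⟨getT'_putT'_false_putT'_true, putT'_putT', putT'_getT', localT'_closeT', localT'_getT',
    localT'_putT'⟩

end Stmt7
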